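/- Lowest-weight identity (concrete form of the conjugation corollary, Corollary 5.4 of the paper): for all natural numbers p,q, one has (ad J₋)^(p+q)(a₊^p b₋^q) = (−1)^q · ε^(p+q) · (p+q)! · a₋^q ∘ b₊^p in E. -/
import Mathlib


open MvPolynomial

noncomputable section

/-- The polynomial ring ℂ[x,y]. -/
abbrev P2 : Type := MvPolynomial (Fin 2) ℂ

/-- The algebra of ℂ-linear endomorphisms of ℂ[x,y]. -/
abbrev E : Type := Module.End ℂ P2

/-- `a₊` : multiplication by `x`. -/
def aP : E := LinearMap.mulLeft ℂ (X 0 : P2)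

/-- `b₊` : multiplication by `y`. -/
def bP : E := LinearMap.mulLeft ℂ (X 1 : P2)

/-- `a₋ = ε ∂/∂x`. -/
def aM (ε : ℝ) : E := (ε : ℂ) • (pderiv (0 : Fin 2)).toLinearMap

/-- `b₋ = ε ∂/∂y`. -/
def bM (ε : ℝ) : E := (ε : ℂ) • (pderiv (1 : Fin 2)).toLinearMap

def J0 (ε : ℝ) : E := (1/2 : ℂ) • (aP * aM ε - bP * bM ε)
def Jp (ε : ℝ) : E := aP * bM ε
def Jm (ε : ℝ) : E := aM ε * bP
def K0 (ε : ℝ) : E := (1/2 : ℂ) • (aP * aM ε + bP * bM ε + (ε : ℂ) • (1 : E))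
def Kp : E := aP * bP
def Km (ε : ℝ) : E := aM ε * bM ε

/-- `(ad J₋)(w) = J₋w − wJ₋`. -/
def adJm (ε : ℝ) (w : E) : E := Jm ε * w - w * Jm ε

/-- `η(p,q,ℓ) = (ad J₋)^ℓ (a₊^p b₋^q)`. -/
def eta (ε : ℝ) (p q ℓ : ℕ) : E := (adJm ε)^[ℓ] (aP ^ p * bM ε ^ q)

open Finset

lemma pderiv_single_zero (i j n : Fin 2) :
    pderiv i ((Pi.single j (1 : P2) : Fin 2 → P2) n) = 0 := by
  rcases eq_or_ne j n with h | h <;> simp [Pi.single_apply, h]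

lemma pderiv_comm' (i j : Fin 2) (f : P2) :
    pderiv i (pderiv j f) = pderiv j (pderiv i f) := by
  induction f using MvPolynomial.induction_on with
  | C a => simp
  | add p q hp hq => simp [hp, hq]
  | mul_X p n hp => simp [pderiv_mul, hp, pderiv_single_zero]; ring

lemma comm_a (ε : ℝ) : aM ε * aP = aP * aM ε + (ε : ℂ) • 1 := by
  apply LinearMap.ext; intro f
  simp [aM, aP, Module.End.mul_apply, pderiv_mul, smul_add, mul_comm, add_comm]

lemma comm_b (ε : ℝ) : bM ε * bP = bP * bM ε + (ε : ℂ) • 1 := by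
  apply LinearMap.ext; intro f
  simp [bM, bP, Module.End.mul_apply, pderiv_mul, smul_add, mul_comm, add_comm]

lemma comm_aP_bP : Commute aP bP := by
  apply LinearMap.ext; intro f
  simp [aP, bP, Module.End.mul_apply]; ring

lemma comm_aM_bP (ε : ℝ) : Commute (aM ε) bP := by
  apply LinearMap.ext; intro f
  simp [aM, bP, Module.End.mul_apply, pderiv_mul]

lemma comm_aP_bM (ε : ℝ) : Commute aP (bM ε) := by
  apply LinearMap.ext; intro f
  simp [aP, bM, Module.End.mul_apply, pderiv_mul]

lemma comm_aM_bM (ε : ℝ) : Commute (aM ε) (bM ε) := by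
  apply LinearMap.ext; intro f
  simp [aM, bM, Module.End.mul_apply, pderiv_comm' 0 1 f]

/-- `ad J₋` bundled as a linear map. -/
def Dad (ε : ℝ) : E →ₗ[ℂ] E := LinearMap.mulLeft ℂ (Jm ε) - LinearMap.mulRight ℂ (Jm ε)

lemma adJm_eq_Dad (ε : ℝ) : adJm ε = ⇑(Dad ε) := by
  funext w; simp [adJm, Dad]

lemma eta_eq (ε : ℝ) (p q ℓ : ℕ) : eta ε p q ℓ = (Dad ε ^ ℓ) (aP ^ p * bM ε ^ q) := by
  rw [eta, adJm_eq_Dad, ← Module.End.pow_apply]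

lemma Dad_mul (ε : ℝ) (u v : E) : Dad ε (u * v) = Dad ε u * v + u * Dad ε v := by
  simp only [Dad, LinearMap.sub_apply, LinearMap.mulLeft_apply, LinearMap.mulRight_apply,
    mul_sub, sub_mul, mul_assoc]
  abel

lemma Dad_of_commute (ε : ℝ) (u : E) (h : Commute (Jm ε) u) : Dad ε u = 0 := by
  simp [Dad, h.eq]

lemma commute_Jm_bP (ε : ℝ) : Commute (Jm ε) bP :=
  (comm_aM_bP ε).mul_left (Commute.refl bP)

lemma commute_Jm_aM (ε : ℝ) : Commute (Jm ε) (aM ε) :=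
  (Commute.refl (aM ε)).mul_left ((comm_aM_bP ε).symm)

lemma Dad_bP_pow (ε : ℝ) (k : ℕ) : Dad ε (bP ^ k) = 0 :=
  Dad_of_commute ε _ ((commute_Jm_bP ε).pow_right k)

lemma Dad_aM_pow (ε : ℝ) (k : ℕ) : Dad ε (aM ε ^ k) = 0 :=
  Dad_of_commute ε _ ((commute_Jm_aM ε).pow_right k)

lemma Dad_aP (ε : ℝ) : Dad ε aP = (ε : ℂ) • bP := by
  have h : Jm ε * aP = aP * Jm ε + (ε : ℂ) • bP := by
    unfold Jm
    rw [mul_assoc, (comm_aP_bP).symm.eq, ← mul_assoc, comm_a, add_mul, smul_mul_assoc,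
      one_mul, mul_assoc]
  simp [Dad, h]

lemma Dad_bM (ε : ℝ) : Dad ε (bM ε) = (-(ε : ℂ)) • aM ε := by
  have h : Jm ε * bM ε = bM ε * Jm ε - (ε : ℂ) • aM ε := by
    unfold Jm
    have hb : bP * bM ε = bM ε * bP - (ε : ℂ) • 1 := by rw [comm_b]; abel
    rw [mul_assoc, hb, mul_sub, ← mul_assoc, (comm_aM_bM ε).eq, mul_smul_comm, mul_one,
      mul_assoc]
  simp only [Dad, LinearMap.sub_apply, LinearMap.mulLeft_apply, LinearMap.mulRight_apply, h,
    neg_smul]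
  module

lemma Dad_aP_pow (ε : ℝ) (n : ℕ) :
    Dad ε (aP ^ n) = ((n : ℂ) * (ε : ℂ)) • (aP ^ (n - 1) * bP) := by
  induction n with
  | zero => simp [Dad_of_commute ε 1 (Commute.one_right _)]
  | succ n IH =>
    rw [pow_succ', Dad_mul, Dad_aP, IH]
    cases n with
    | zero => simp
    | succ m =>
      simp only [Nat.succ_sub_one, smul_mul_assoc, mul_smul_comm]
      rw [((comm_aP_bP).symm.pow_right (m + 1)).eq, ← mul_assoc, ← pow_succ']
      match_scalars <;> push_cast <;> ring

lemma Dad_bM_pow (ε : ℝ) (n : ℕ) :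
    Dad ε (bM ε ^ n) = ((n : ℂ) * (-(ε : ℂ))) • (aM ε * bM ε ^ (n - 1)) := by
  induction n with
  | zero => simp [Dad_of_commute ε 1 (Commute.one_right _)]
  | succ n IH =>
    rw [pow_succ', Dad_mul, Dad_bM, IH]
    cases n with
    | zero => simp
    | succ m =>
      simp only [Nat.succ_sub_one, smul_mul_assoc, mul_smul_comm]
      rw [show bM ε * (aM ε * bM ε ^ m) = aM ε * bM ε ^ (m + 1) by
        rw [← mul_assoc, ← (comm_aM_bM ε).eq, mul_assoc, ← pow_succ']]
      match_scalars <;> push_cast <;> ring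

/-- iterated Leibniz rule -/
lemma Dad_pow_mul (ε : ℝ) (n : ℕ) (u v : E) :
    (Dad ε ^ n) (u * v) =
      ∑ k ∈ range (n + 1), n.choose k • ((Dad ε ^ (n - k)) u * (Dad ε ^ k) v) := by
  induction n with
  | zero => simp
  | succ n IH =>
    calc
      (Dad ε ^ (n + 1)) (u * v) =
          Dad ε (∑ k ∈ range (n + 1),
              n.choose k • ((Dad ε ^ (n - k)) u * (Dad ε ^ k) v)) := by
        rw [pow_succ', Module.End.mul_apply, IH]
      _ = (∑ k ∈ range (n + 1),
            n.choose k • ((Dad ε ^ (n - k + 1)) u * (Dad ε ^ k) v)) +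
          ∑ k ∈ range (n + 1),
            n.choose k • ((Dad ε ^ (n - k)) u * (Dad ε ^ (k + 1)) v) := by
        rw [map_sum]
        simp_rw [map_nsmul, Dad_mul, smul_add, sum_add_distrib,
          ← Module.End.mul_apply (Dad ε), ← pow_succ']
      _ = (∑ k ∈ range (n + 1),
                n.choose k.succ • ((Dad ε ^ (n - k)) u * (Dad ε ^ (k + 1)) v)) +
              1 • ((Dad ε ^ (n + 1)) u * (Dad ε ^ 0) v) +
            ∑ k ∈ range (n + 1),
              n.choose k • ((Dad ε ^ (n - k)) u * (Dad ε ^ (k + 1)) v) := ?_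
      _ = ((∑ k ∈ range (n + 1),
              n.choose k • ((Dad ε ^ (n - k)) u * (Dad ε ^ (k + 1)) v)) +
              ∑ k ∈ range (n + 1),
                n.choose k.succ • ((Dad ε ^ (n - k)) u * (Dad ε ^ (k + 1)) v)) +
            1 • ((Dad ε ^ (n + 1)) u * (Dad ε ^ 0) v) := by
        rw [add_comm, add_assoc]
      _ = (∑ i ∈ range (n + 1),
              (n + 1).choose (i + 1) •
                ((Dad ε ^ (n + 1 - (i + 1))) u * (Dad ε ^ (i + 1)) v)) +
            1 • ((Dad ε ^ (n + 1)) u * (Dad ε ^ 0) v) := by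
        simp_rw [Nat.choose_succ_succ, Nat.succ_sub_succ, add_smul, sum_add_distrib]
      _ = ∑ k ∈ range (n + 1 + 1),
            (n + 1).choose k • ((Dad ε ^ (n + 1 - k)) u * (Dad ε ^ k) v) := by
        rw [sum_range_succ' _ (n + 1), Nat.choose_zero_right, tsub_zero]
    congr
    refine (sum_range_succ' _ _).trans (congr_arg₂ (· + ·) ?_ ?_)
    · rw [sum_range_succ, Nat.choose_succ_self, zero_smul, add_zero]
      refine sum_congr rfl fun k hk => ?_
      rw [mem_range] at hk
      congr
      omega
    · rw [Nat.choose_zero_right, tsub_zero]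

lemma Dad_pow_aP (ε : ℝ) (p s : ℕ) :
    (Dad ε ^ s) (aP ^ p) =
      (((p.descFactorial s : ℕ) : ℂ) * (ε : ℂ) ^ s) • (aP ^ (p - s) * bP ^ s) := by
  induction s with
  | zero => simp
  | succ s IH =>
    rw [pow_succ', Module.End.mul_apply, IH, map_smul, Dad_mul, Dad_aP_pow, Dad_bP_pow,
      mul_zero, add_zero, smul_mul_assoc]
    rw [show aP ^ (p - s - 1) * bP * bP ^ s = aP ^ (p - (s + 1)) * bP ^ (s + 1) by
      rw [mul_assoc, ← pow_succ', Nat.sub_sub]]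
    rw [Nat.descFactorial_succ]
    match_scalars
    push_cast
    ring

lemma Dad_pow_bM (ε : ℝ) (q t : ℕ) :
    (Dad ε ^ t) (bM ε ^ q) =
      (((q.descFactorial t : ℕ) : ℂ) * (-(ε : ℂ)) ^ t) • (aM ε ^ t * bM ε ^ (q - t)) := by
  induction t with
  | zero => simp
  | succ t IH =>
    rw [pow_succ', Module.End.mul_apply, IH, map_smul, Dad_mul, Dad_bM_pow, Dad_aM_pow,
      zero_mul, zero_add]
    simp only [mul_smul_comm]
    rw [show aM ε ^ t * (aM ε * bM ε ^ (q - t - 1)) = aM ε ^ (t + 1) * bM ε ^ (q - (t + 1)) by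
      rw [← mul_assoc, ← pow_succ, Nat.sub_sub]]
    rw [Nat.descFactorial_succ]
    match_scalars
    push_cast
    ring

/-- Lowest-weight identity (Corollary 5.4):
`(ad J₋)^(p+q)(a₊^p b₋^q) = (−1)^q ε^(p+q) (p+q)! · a₋^q ∘ b₊^p`. -/
theorem eta_lowest_weight (ε : ℝ) (p q : ℕ) :
    eta ε p q (p + q)
      = ((-1 : ℂ) ^ q * (ε : ℂ) ^ (p + q) * (((p + q).factorial : ℕ) : ℂ)) •
          (aM ε ^ q * bP ^ p) := by
  rw [eta_eq, Dad_pow_mul]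
  rw [Finset.sum_eq_single q]
  · rw [Dad_pow_aP, Dad_pow_bM, show p + q - q = p by omega,
      Nat.sub_self, Nat.sub_self, Nat.descFactorial_self, Nat.descFactorial_self,
      pow_zero, pow_zero, one_mul, mul_one]
    rw [smul_mul_smul_comm, ((comm_aM_bP ε).symm.pow_pow p q).eq]
    have key : (((p + q).choose q : ℕ) : ℂ) * (q.factorial : ℂ) * (p.factorial : ℂ)
        = (((p + q).factorial : ℕ) : ℂ) := by
      exact_mod_cast congrArg (Nat.cast : ℕ → ℂ)
        (by simpa using Nat.choose_mul_factorial_mul_factorial (Nat.le_add_left q p))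
    rw [← Nat.cast_smul_eq_nsmul ℂ, smul_smul]
    congr 1
    linear_combination ((-1 : ℂ) ^ q * (ε : ℂ) ^ p * (ε : ℂ) ^ q) * key
  · intro k hk hne
    rw [Dad_pow_aP, Dad_pow_bM]
    rcases lt_or_gt_of_ne hne with h | h
    · rw [Nat.descFactorial_eq_zero_iff_lt.2 (show p < p + q - k by omega)]
      simp
    · rw [Nat.descFactorial_eq_zero_iff_lt.2 (show q < k from h)]
      simp
  · intro h
    exact absurd (mem_range.mpr (by omega)) h
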